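/- arXiv:2402.04718 — 5 statements merged into one kernel-verified Lean document; each statement's English description precedes it below -/
import Mathlib

section
/- Let c > 0 and r ∈ (0,1) be real constants. Suppose V : ℝ → ℝ is differentiable, V(t) ≥ 0 for all t ≥ 0, and V'(t) ≤ −c·(V(t))^r for all t ≥ 0. Then there exists a time T with 0 ≤ T ≤ V(0)^{1−r} / (c(1−r)) such that V(T) = 0. -/
/-! Along any stretch where `V > 0`, the chain rule and `V' ≤ -c V^r` give
`(V^(1-r))' = (1-r) V^(-r) V' ≤ -c(1-r)`, so `V^(1-r)` decreases at least linearly with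
slope `c(1-r)`. If `V` stayed positive on `[0, T]` with `T = V(0)^(1-r)/(c(1-r))`, then
`V(T)^(1-r) ≤ V(0)^(1-r) - c(1-r)T = 0`, which is absurd. -/

open Set

theorem deriv_rpow_one_sub_le_of_deriv_le {V : ℝ → ℝ} {c r x : ℝ} (hr : r < 1)
    (hx : 0 < V x) (hVx : DifferentiableAt ℝ V x) (hV' : deriv V x ≤ -c * V x ^ r) :
    deriv (fun t => V t ^ (1 - r)) x ≤ -(c * (1 - r)) := by
  rw [(hVx.hasDerivAt.rpow_const (Or.inl hx.ne')).deriv]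
  have hcancel : V x ^ r * V x ^ (1 - r - 1) = 1 := by
    rw [← Real.rpow_add hx]
    norm_num
  calc deriv V x * (1 - r) * V x ^ (1 - r - 1)
      ≤ -c * V x ^ r * ((1 - r) * V x ^ (1 - r - 1)) := by
        rw [mul_assoc]
        exact mul_le_mul_of_nonneg_right hV'
          (mul_nonneg (by linarith) (Real.rpow_nonneg hx.le _))
    _ = -(c * (1 - r)) * (V x ^ r * V x ^ (1 - r - 1)) := by ring
    _ = -(c * (1 - r)) := by rw [hcancel, mul_one]

theorem rpow_one_sub_le_sub_of_deriv_le {V : ℝ → ℝ} {c r a b : ℝ} (hr : r < 1) (hab : a ≤ b)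
    (hcont : ContinuousOn V (Icc a b)) (hdiff : ∀ t ∈ Ioo a b, DifferentiableAt ℝ V t)
    (hpos : ∀ t ∈ Icc a b, 0 < V t) (hV' : ∀ t ∈ Ioo a b, deriv V t ≤ -c * V t ^ r) :
    V b ^ (1 - r) ≤ V a ^ (1 - r) - c * (1 - r) * (b - a) := by
  have hmvt := (convex_Icc a b).image_sub_le_mul_sub_of_deriv_le
    (f := fun t => V t ^ (1 - r))
    (hcont.rpow_const fun _ _ => Or.inr (by linarith))
    (fun t ht => by
      rw [interior_Icc] at ht
      exact ((hdiff t ht).rpow_const (Or.inl (hpos t (Ioo_subset_Icc_self ht)).ne'))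
        |>.differentiableWithinAt)
    (fun t ht => by
      rw [interior_Icc] at ht
      exact deriv_rpow_one_sub_le_of_deriv_le hr (hpos t (Ioo_subset_Icc_self ht))
        (hdiff t ht) (hV' t ht))
    a (left_mem_Icc.2 hab) b (right_mem_Icc.2 hab) hab
  linarith

/-- Finite-time convergence lemma: if `V ≥ 0` and `V' ≤ −c·V^r` with `c > 0`
and `r ∈ (0,1)`, then `V` reaches zero at some time
`T ≤ V(0)^{1−r}/(c(1−r))`. -/
theorem finite_time_convergence
    (c r : ℝ) (hc : 0 < c) (hr : r ∈ Set.Ioo (0 : ℝ) 1)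
    (V : ℝ → ℝ) (hV : Differentiable ℝ V)
    (hVnonneg : ∀ t, 0 ≤ t → 0 ≤ V t)
    (hV' : ∀ t, 0 ≤ t → deriv V t ≤ -c * (V t) ^ r) :
    ∃ T, 0 ≤ T ∧ T ≤ (V 0) ^ (1 - r) / (c * (1 - r)) ∧ V T = 0 := by
  have hcr : 0 < c * (1 - r) := mul_pos hc (by linarith [hr.2])
  set T := (V 0) ^ (1 - r) / (c * (1 - r)) with hT
  have hT0 : 0 ≤ T := div_nonneg (Real.rpow_nonneg (hVnonneg 0 le_rfl) _) hcr.le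
  by_contra! hne
  have hpos : ∀ t ∈ Icc 0 T, 0 < V t := fun t ht =>
    (hVnonneg t ht.1).lt_of_ne (hne t ht.1 ht.2).symm
  have hdecay := rpow_one_sub_le_sub_of_deriv_le hr.2 hT0 hV.continuous.continuousOn
    (fun t _ => hV t) hpos (fun t ht => hV' t ht.1.le)
  have hzero : V 0 ^ (1 - r) - c * (1 - r) * (T - 0) = 0 := by
    rw [sub_zero, hT, mul_div_cancel₀ _ hcr.ne', sub_self]
  linarith [Real.rpow_pos_of_pos (hpos T ⟨hT0, le_rfl⟩) (1 - r)]
end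

section
/- Let n ≥ 1, let b₀ be a real symmetric positive-definite n×n matrix with largest eigenvalue λ_max, and let ε > 0, D̃ > 0 be constants. Let d : ℝ → ℝⁿ satisfy ‖d(t)‖₂ < D̃ for all t, let K : ℝ → ℝ satisfy K(t) > D̃ for all t, define u(t) := −(K(t)/ε)·s(t), and suppose s : ℝ → ℝⁿ is differentiable with s'(t) = λ_max⁻¹·d(t) + b₀⁻¹·u(t). Define V(t) := (1/2)·s(t)ᵀ b₀ s(t). Then at every time t with ‖s(t)‖₂ > ε, the derivative of V satisfies V'(t) < −√(2/λ_max)·(K(t) − D̃)·√(V(t)). -/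
/-!
Write `N = ‖s‖₂`. Since `b₀` is symmetric, `V' = sᵀ b₀ s'`, and `b₀ b₀⁻¹ = 1` turns this into
`λ_max⁻¹ sᵀ b₀ d − (K/ε) N²`. The ℓ²-operator norm of a self-adjoint operator is its spectral
radius, which for a positive semidefinite `b₀` is `λ_max`; hence `sᵀ b₀ d ≤ λ_max N ‖d‖₂`, so
`V' < N D̃ − K N` as soon as `N > ε`. Finally `V ≤ λ_max N² / 2` bounds `√(2V/λ_max)` by `N`.
-/

/-- Euclidean norm on `ℝⁿ`. -/
noncomputable def norm2 {n : ℕ} (x : Fin n → ℝ) : ℝ := Real.sqrt (∑ i, x i ^ 2)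

open Matrix

theorem Matrix.PosDef.pos_of_hasEigenvalue {ι : Type*} [Fintype ι] [DecidableEq ι]
    {A : Matrix ι ι ℝ} (hA : A.PosDef) {μ : ℝ} (hμ : Module.End.HasEigenvalue (toLin' A) μ) :
    0 < μ := by
  rw [Module.End.hasEigenvalue_iff_mem_spectrum, spectrum_toLin',
    hA.isHermitian.spectrum_real_eq_range_eigenvalues] at hμ
  obtain ⟨i, rfl⟩ := hμ
  exact hA.eigenvalues_pos i

theorem Matrix.PosSemidef.norm_toEuclideanCLM_le {ι : Type*} [Fintype ι] [DecidableEq ι]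
    {A : Matrix ι ι ℝ} (hA : A.PosSemidef) {c : ℝ} (hc0 : 0 ≤ c)
    (hc : ∀ μ, Module.End.HasEigenvalue (toLin' A) μ → μ ≤ c) :
    ‖toEuclideanCLM (𝕜 := ℝ) A‖ ≤ c := by
  have hT : IsSelfAdjoint (toEuclideanCLM (𝕜 := ℝ) A) := hA.isHermitian.isSelfAdjoint.map _
  have hspec : spectrum ℝ (toEuclideanCLM (𝕜 := ℝ) A) = spectrum ℝ A :=
    AlgEquiv.spectrum_eq (toEuclideanCLM (𝕜 := ℝ) (n := ι)) A
  suffices h : spectralRadius ℝ (toEuclideanCLM (𝕜 := ℝ) A) ≤ ENNReal.ofReal c by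
    rwa [ContinuousLinearMap.spectralRadius_eq_nnnorm _ hT, ← enorm_eq_nnnorm, ← ofReal_norm,
      ENNReal.ofReal_le_ofReal_iff hc0] at h
  refine iSup₂_le fun μ hμ => ?_
  rw [hspec] at hμ
  have hμc : μ ≤ c :=
    hc μ (Module.End.hasEigenvalue_iff_mem_spectrum.mpr (by rwa [spectrum_toLin']))
  obtain ⟨i, rfl⟩ := hA.isHermitian.spectrum_real_eq_range_eigenvalues ▸ hμ
  rw [← enorm_eq_nnnorm, ← ofReal_norm, Real.norm_of_nonneg (hA.eigenvalues_nonneg i)]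
  exact ENNReal.ofReal_le_ofReal hμc

theorem Matrix.IsSymm.dotProduct_mulVec_comm {ι : Type*} [Fintype ι] {A : Matrix ι ι ℝ}
    (hA : A.IsSymm) (x y : ι → ℝ) : x ⬝ᵥ A *ᵥ y = y ⬝ᵥ A *ᵥ x := by
  rw [dotProduct_mulVec, ← mulVec_transpose, hA.eq, dotProduct_comm]

theorem dotProduct_mulVec_smul_add_inv_mulVec_smul {ι : Type*} [Fintype ι] [DecidableEq ι]
    {A : Matrix ι ι ℝ} (hA : IsUnit A.det) (a c : ℝ) (x y : ι → ℝ) :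
    x ⬝ᵥ A *ᵥ (a • y + A⁻¹ *ᵥ (c • x)) = a * (x ⬝ᵥ A *ᵥ y) + c * (x ⬝ᵥ x) := by
  rw [mulVec_add, mulVec_mulVec, mul_nonsing_inv _ hA, one_mulVec, mulVec_smul, dotProduct_add,
    dotProduct_smul, dotProduct_smul, smul_eq_mul, smul_eq_mul]

theorem hasDerivAt_half_dotProduct_mulVec_self {ι : Type*} [Fintype ι] [DecidableEq ι]
    {A : Matrix ι ι ℝ} (hA : A.IsSymm) {f : ℝ → ι → ℝ} {f' : ι → ℝ} {t : ℝ}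
    (hf : HasDerivAt f f' t) :
    HasDerivAt (fun τ => (1 / 2 : ℝ) * f τ ⬝ᵥ A *ᵥ f τ) (f t ⬝ᵥ A *ᵥ f') t := by
  have hg : HasDerivAt (fun τ => WithLp.toLp 2 (f τ)) (WithLp.toLp 2 f') t :=
    (PiLp.continuousLinearEquiv 2 ℝ (fun _ : ι => ℝ)).symm.hasFDerivAt.comp_hasDerivAt t hf
  have := (hg.inner ℝ ((toEuclideanCLM (𝕜 := ℝ) A).hasFDerivAt.comp_hasDerivAt t hg)).const_mul
    (1 / 2 : ℝ)
  simp only [Function.comp_apply, inner_toEuclideanCLM] at this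
  rwa [hA.dotProduct_mulVec_comm f', ← two_mul, ← mul_assoc, one_div_mul_cancel two_ne_zero,
    one_mul] at this

theorem norm2_eq_norm_toLp {n : ℕ} (x : Fin n → ℝ) : norm2 x = ‖WithLp.toLp 2 x‖ := by
  simp [norm2, EuclideanSpace.norm_eq]

theorem dotProduct_self_eq_norm2_sq {n : ℕ} (x : Fin n → ℝ) : x ⬝ᵥ x = norm2 x ^ 2 := by
  rw [norm2, Real.sq_sqrt (by positivity)]
  simp [dotProduct, sq]

theorem dotProduct_mulVec_le_mul_norm2 {n : ℕ} {A : Matrix (Fin n) (Fin n) ℝ}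
    (hA : A.PosSemidef) {c : ℝ} (hc0 : 0 ≤ c)
    (hc : ∀ μ, Module.End.HasEigenvalue (toLin' A) μ → μ ≤ c) (x y : Fin n → ℝ) :
    x ⬝ᵥ A *ᵥ y ≤ c * norm2 x * norm2 y := by
  rw [norm2_eq_norm_toLp, norm2_eq_norm_toLp, ← inner_toEuclideanCLM]
  calc inner ℝ (WithLp.toLp 2 x) (toEuclideanCLM (𝕜 := ℝ) A (WithLp.toLp 2 y))
      ≤ ‖WithLp.toLp 2 x‖ * ‖toEuclideanCLM (𝕜 := ℝ) A (WithLp.toLp 2 y)‖ :=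
        real_inner_le_norm _ _
    _ ≤ ‖WithLp.toLp 2 x‖ * (c * ‖WithLp.toLp 2 y‖) := by
      grw [ContinuousLinearMap.le_opNorm, hA.norm_toEuclideanCLM_le hc0 hc]
    _ = _ := by ring

theorem sqrt_two_div_mul_sqrt_half_le {l q N : ℝ} (hl : 0 < l) (hN : 0 ≤ N)
    (hq : q ≤ l * N * N) : √(2 / l) * √(1 / 2 * q) ≤ N := by
  rw [← Real.sqrt_mul (by positivity), ← Real.sqrt_sq hN]
  refine Real.sqrt_le_sqrt ?_
  calc 2 / l * (1 / 2 * q) = q / l := by ring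
    _ ≤ N ^ 2 := (div_le_iff₀ hl).mpr (by linear_combination hq)

theorem reaching_inequality_general
    (n : ℕ)
    (b₀ : Matrix (Fin n) (Fin n) ℝ) (hsymm : b₀.IsSymm) (hpd : b₀.PosDef)
    (lmax : ℝ)
    (hlmax : IsGreatest {μ : ℝ | Module.End.HasEigenvalue (Matrix.toLin' b₀) μ} lmax)
    (ε D : ℝ) (hε : 0 < ε) (hD : 0 < D)
    (d : ℝ → Fin n → ℝ) (hd : ∀ t, norm2 (d t) < D)
    (K : ℝ → ℝ) (hK : ∀ t, D < K t)
    (s : ℝ → Fin n → ℝ) (hs : Differentiable ℝ s)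
    (u : ℝ → Fin n → ℝ) (hu : ∀ t, u t = -(K t / ε) • s t)
    (hs' : ∀ t, deriv s t = lmax⁻¹ • d t + Matrix.mulVec b₀⁻¹ (u t)) :
    ∀ t, ε < norm2 (s t) →
      deriv (fun τ => (1 / 2 : ℝ) * dotProduct (s τ) (Matrix.mulVec b₀ (s τ))) t
        < -(Real.sqrt (2 / lmax)) * (K t - D) *
            Real.sqrt ((1 / 2 : ℝ) * dotProduct (s t) (Matrix.mulVec b₀ (s t))) := by
  intro t ht
  have hl : 0 < lmax := hpd.pos_of_hasEigenvalue hlmax.1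
  have hquad := dotProduct_mulVec_le_mul_norm2 hpd.posSemidef hl.le hlmax.2
  set N := norm2 (s t)
  have hN : 0 < N := hε.trans ht
  have hK0 : 0 < K t := hD.trans (hK t)
  have hdist : lmax⁻¹ * (s t ⬝ᵥ b₀ *ᵥ d t) < N * D :=
    calc _ ≤ N * norm2 (d t) := (inv_mul_le_iff₀ hl).mpr (by linear_combination hquad (s t) (d t))
      _ < N * D := by gcongr; exact hd t
  have hreach : K t * N < K t / ε * N ^ 2 :=
    calc K t * N = K t * N * 1 := (mul_one _).symm
      _ < K t * N * (N / ε) := by gcongr; exact (one_lt_div hε).mpr ht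
      _ = K t / ε * N ^ 2 := by ring
  have hV : √(2 / lmax) * √(1 / 2 * s t ⬝ᵥ b₀ *ᵥ s t) ≤ N :=
    sqrt_two_div_mul_sqrt_half_le hl hN.le (hquad (s t) (s t))
  rw [(hasDerivAt_half_dotProduct_mulVec_self hsymm (hs t).hasDerivAt).deriv, hs' t, hu t,
    dotProduct_mulVec_smul_add_inv_mulVec_smul ((isUnit_iff_isUnit_det b₀).mp hpd.isUnit),
    dotProduct_self_eq_norm2_sq]
  calc lmax⁻¹ * (s t ⬝ᵥ b₀ *ᵥ d t) + -(K t / ε) * N ^ 2 < -(K t - D) * N := by linarith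
    _ ≤ _ := by linear_combination mul_le_mul_of_nonneg_left hV (sub_pos.mpr (hK t)).le

/-- Lemma 1 (reaching inequality): with `u = −(K/ε)s`,
`s' = λ_max⁻¹ d + b₀⁻¹ u`, `‖d‖₂ < D̃`, `K > D̃`, and
`V = ½ sᵀ b₀ s`, whenever `‖s‖₂ > ε` we have
`V' < −√(2/λ_max)·(K − D̃)·√V`. -/
theorem reaching_inequality
    (n : ℕ) (hn : 1 ≤ n)
    (b₀ : Matrix (Fin n) (Fin n) ℝ) (hsymm : b₀.IsSymm) (hpd : b₀.PosDef)
    (lmax : ℝ)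
    (hlmax : IsGreatest {μ : ℝ | Module.End.HasEigenvalue (Matrix.toLin' b₀) μ} lmax)
    (ε D : ℝ) (hε : 0 < ε) (hD : 0 < D)
    (d : ℝ → Fin n → ℝ) (hd : ∀ t, norm2 (d t) < D)
    (K : ℝ → ℝ) (hK : ∀ t, D < K t)
    (s : ℝ → Fin n → ℝ) (hs : Differentiable ℝ s)
    (u : ℝ → Fin n → ℝ) (hu : ∀ t, u t = -(K t / ε) • s t)
    (hs' : ∀ t, deriv s t = lmax⁻¹ • d t + Matrix.mulVec b₀⁻¹ (u t)) :
    ∀ t, ε < norm2 (s t) →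
      deriv (fun τ => (1 / 2 : ℝ) * dotProduct (s τ) (Matrix.mulVec b₀ (s τ))) t
        < -(Real.sqrt (2 / lmax)) * (K t - D) *
            Real.sqrt ((1 / 2 : ℝ) * dotProduct (s t) (Matrix.mulVec b₀ (s t))) :=
  reaching_inequality_general n b₀ hsymm hpd lmax hlmax ε D hε hD d hd K hK s hs u hu hs'
end

section
/- Let ε, α, β > 0 and ρ ∈ (1,2) be real constants, and let R > 0 be the unique zero of F(x) := ε − α·sig^ρ(x) − β·x. Then for all real numbers q and ω, if |ω + α·sig^ρ(q) + β·q| ≤ ε and |q| > R, then q·ω < 0. -/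
/-- `sig^ρ(x) = |x|^ρ · sgn(x)`. -/
noncomputable def sig (ρ x : ℝ) : ℝ := |x| ^ ρ * Real.sign x

/-!
The map `g x = α·sig^ρ(x) + β·x` is odd and strictly increasing, and `F(R) = 0` says `g R = ε`.
For `q > R` the hypothesis gives `ω ≤ ε - g q = g R - g q < 0`; for `q < -R`, oddness gives
`ω ≥ -ε - g q = g (-q) - g R > 0`.
-/

theorem sig_neg (ρ x : ℝ) : sig ρ (-x) = -sig ρ x := by
  simp only [sig, abs_neg, Real.sign_neg, mul_neg]

theorem sig_of_nonneg {ρ x : ℝ} (hρ : ρ ≠ 0) (hx : 0 ≤ x) : sig ρ x = x ^ ρ := by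
  rcases hx.eq_or_lt with rfl | hx
  · simp [sig, Real.zero_rpow hρ]
  · simp [sig, Real.sign_of_pos hx, abs_of_pos hx]

theorem strictMono_sig {ρ : ℝ} (hρ : 0 < ρ) : StrictMono (sig ρ) := by
  refine strictMono_of_odd_strictMonoOn_nonneg (sig_neg ρ) ?_
  intro x hx y hy hxy
  rw [sig_of_nonneg hρ.ne' hx, sig_of_nonneg hρ.ne' hy]
  exact Real.strictMonoOn_rpow_Ici_of_exponent_pos hρ hx hy hxy

theorem mul_neg_of_abs_add_le_of_lt_abs {g : ℝ → ℝ} (hg : StrictMono g)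
    (hodd : ∀ x, g (-x) = -g x) {R q ω : ℝ} (hq : |ω + g q| ≤ g R) (hRq : R < |q|) :
    q * ω < 0 := by
  obtain ⟨hlow, hhigh⟩ := abs_le.mp hq
  rcases lt_trichotomy q 0 with hneg | rfl | hpos
  · have hlt : g R < g (-q) := hg (by rwa [abs_of_neg hneg] at hRq)
    rw [hodd] at hlt
    exact mul_neg_of_neg_of_pos hneg (by linarith)
  · have hg0 : g 0 = 0 := by linarith [neg_zero (G := ℝ) ▸ hodd 0]
    have hlt : g R < g 0 := hg (by simpa using hRq)
    linarith
  · have hlt : g R < g q := hg (by rwa [abs_of_pos hpos] at hRq)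
    exact mul_neg_of_pos_of_neg hpos (by linarith)

theorem attraction_outside_bound_general
    (ε α β ρ : ℝ) (hα : 0 < α) (hβ : 0 < β)
    (hρ : ρ ∈ Set.Ioo (1 : ℝ) 2)
    (R : ℝ)
    (hFR : ε - α * sig ρ R - β * R = 0) :
    ∀ q ω : ℝ, |ω + α * sig ρ q + β * q| ≤ ε → R < |q| → q * ω < 0 := by
  intro q ω hq hRq
  set g : ℝ → ℝ := fun x => α * sig ρ x + β * x with hg
  have hg_mono : StrictMono g :=
    ((strictMono_sig (by linarith [hρ.1])).const_mul hα).add (strictMono_mul_left_of_pos hβ)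
  have hg_odd : ∀ x, g (-x) = -g x := fun x => by simp only [hg, sig_neg]; ring
  have hgR : g R = ε := by linarith
  refine mul_neg_of_abs_add_le_of_lt_abs hg_mono hg_odd ?_ hRq
  rwa [hgR, hg, ← add_assoc]

/-- Outside the bound `R`, the Lyapunov derivative term is negative: if
`|ω + α·sig^ρ(q) + β·q| ≤ ε` and `|q| > R` then `q·ω < 0`. -/
theorem attraction_outside_bound
    (ε α β ρ : ℝ) (hε : 0 < ε) (hα : 0 < α) (hβ : 0 < β)
    (hρ : ρ ∈ Set.Ioo (1 : ℝ) 2)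
    (R : ℝ) (hR : 0 < R)
    (hFR : ε - α * sig ρ R - β * R = 0)
    (hFuniq : ∀ x : ℝ, ε - α * sig ρ x - β * x = 0 → x = R) :
    ∀ q ω : ℝ, |ω + α * sig ρ q + β * q| ≤ ε → R < |q| → q * ω < 0 :=
  attraction_outside_bound_general ε α β ρ hα hβ hρ R hFR
end

section
/- Let ρ ∈ (1,2) and for i = 1,2,3 let αᵢ > 0 and βᵢ > 0 be real constants, and set β_min := min(β₁, β₂, β₃). Suppose r : ℝ → ℝ³ is differentiable and each component satisfies the sliding-surface dynamics rᵢ'(t) = −αᵢ·sig^ρ(rᵢ(t)) − βᵢ·rᵢ(t) for all t ≥ 0. Then ‖r(t)‖₂² ≤ ‖r(0)‖₂² · exp(−2·β_min·t) for all t ≥ 0; in particular r(t) → 0 as t → ∞. -/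
open Real Filter Topology

lemma mul_sig_nonneg (ρ x : ℝ) : 0 ≤ x * sig ρ x := by
  have habs : 0 ≤ |x| ^ ρ := rpow_nonneg (abs_nonneg x) ρ
  unfold sig
  rcases lt_trichotomy x 0 with hx | rfl | hx
  · rw [sign_of_neg hx]; nlinarith
  · simp
  · rw [sign_of_pos hx]; nlinarith

lemma mul_sliding_field_le {ρ a b c : ℝ} (ha : 0 ≤ a) (hc : c ≤ b) (x : ℝ) :
    x * (-a * sig ρ x - b * x) ≤ -c * x ^ 2 := by
  nlinarith [mul_nonneg ha (mul_sig_nonneg ρ x), mul_nonneg (sub_nonneg.mpr hc) (sq_nonneg x)]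

lemma le_mul_exp_of_hasDerivAt_le_neg_mul {f f' : ℝ → ℝ} {c : ℝ}
    (hf : ∀ t, 0 ≤ t → HasDerivAt f (f' t) t) (hbound : ∀ t, 0 ≤ t → f' t ≤ -c * f t)
    {t : ℝ} (ht : 0 ≤ t) : f t ≤ f 0 * exp (-c * t) := by
  have key := le_gronwallBound_of_liminf_deriv_right_le (K := -c) (ε := 0) (b := t)
    (fun x hx ↦ (hf x hx.1).continuousAt.continuousWithinAt)
    (fun x hx _ hr ↦ (hf x hx.1).hasDerivWithinAt.liminf_right_slope_le hr)
    le_rfl (fun x hx ↦ by simpa using hbound x hx.1) t ⟨ht, le_rfl⟩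
  simpa [gronwallBound_ε0] using key

section SumOfSquares

variable {ι : Type*} [Fintype ι] {r : ℝ → ι → ℝ}

lemma hasDerivAt_sum_sq (hr : Differentiable ℝ r) (t : ℝ) :
    HasDerivAt (fun τ ↦ ∑ i, r τ i ^ 2) (∑ i, 2 * r t i * deriv (fun τ ↦ r τ i) t) t := by
  refine HasDerivAt.fun_sum fun i _ ↦ ?_
  simpa using ((differentiable_pi.mp hr i t).hasDerivAt).fun_pow 2

lemma sum_sq_le_mul_exp_of_sliding {ρ c : ℝ} {α β : ι → ℝ} (hα : ∀ i, 0 ≤ α i)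
    (hc : ∀ i, c ≤ β i) (hr : Differentiable ℝ r)
    (hdyn : ∀ i, ∀ t, 0 ≤ t →
      deriv (fun τ ↦ r τ i) t = -α i * sig ρ (r t i) - β i * r t i)
    {t : ℝ} (ht : 0 ≤ t) :
    ∑ i, r t i ^ 2 ≤ (∑ i, r 0 i ^ 2) * exp (-(2 * c) * t) := by
  refine le_mul_exp_of_hasDerivAt_le_neg_mul (fun t _ ↦ hasDerivAt_sum_sq hr t) (fun s hs ↦ ?_) ht
  rw [Finset.mul_sum]
  refine Finset.sum_le_sum fun i _ ↦ ?_
  rw [hdyn i s hs]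
  nlinarith [mul_sliding_field_le (ρ := ρ) (hα i) (hc i) (r s i)]

lemma tendsto_zero_of_sum_sq_le_mul_exp {C c : ℝ} (hc : 0 < c)
    (h : ∀ t, 0 ≤ t → ∑ i, r t i ^ 2 ≤ C * exp (-c * t)) :
    Tendsto r atTop (𝓝 0) := by
  have hbound : Tendsto (fun t ↦ C * exp (-c * t)) atTop (𝓝 0) := by
    simpa using (tendsto_exp_neg_atTop_nhds_zero.comp
      (tendsto_id.const_mul_atTop hc)).const_mul C
  refine tendsto_pi_nhds.mpr fun i ↦ ?_
  have hsq : Tendsto (fun t ↦ r t i ^ 2) atTop (𝓝 0) := by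
    refine squeeze_zero' (Eventually.of_forall fun t ↦ sq_nonneg _) ?_ hbound
    filter_upwards [eventually_ge_atTop 0] with t ht
    exact (Finset.single_le_sum (fun j _ ↦ sq_nonneg (r t j)) (Finset.mem_univ i)).trans (h t ht)
  refine (tendsto_zero_iff_abs_tendsto_zero _).mpr ?_
  simpa [Function.comp_def, sqrt_sq_eq_abs] using hsq.sqrt

end SumOfSquares

theorem sliding_surface_asymptotic_stability_general
    (ρ : ℝ)
    (α β : Fin 3 → ℝ) (hα : ∀ i, 0 < α i) (hβ : ∀ i, 0 < β i)
    (r : ℝ → Fin 3 → ℝ) (hr : Differentiable ℝ r)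
    (hdyn : ∀ i, ∀ t, 0 ≤ t →
      deriv (fun τ => r τ i) t = -α i * sig ρ (r t i) - β i * r t i) :
    (∀ t, 0 ≤ t →
      (∑ i, (r t i) ^ 2) ≤
        (∑ i, (r 0 i) ^ 2) * Real.exp (-2 * min (β 0) (min (β 1) (β 2)) * t)) ∧
    Filter.Tendsto r Filter.atTop (nhds 0) := by
  set b := min (β 0) (min (β 1) (β 2))
  have hb : 0 < b := lt_min (hβ 0) (lt_min (hβ 1) (hβ 2))
  have hle : ∀ i, b ≤ β i := by
    intro i
    fin_cases i <;> simp [b]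
  have hdecay : ∀ t, 0 ≤ t → ∑ i, r t i ^ 2 ≤ (∑ i, r 0 i ^ 2) * exp (-(2 * b) * t) :=
    fun t ht ↦ sum_sq_le_mul_exp_of_sliding (fun i ↦ (hα i).le) hle hr hdyn ht
  exact ⟨fun t ht ↦ by simpa using hdecay t ht,
    tendsto_zero_of_sum_sq_le_mul_exp (by positivity) hdecay⟩

/-- Proposition 1 (asymptotic stability on the orbital sliding surface):
if each component satisfies `rᵢ' = −αᵢ·sig^ρ(rᵢ) − βᵢ·rᵢ`, then
`‖r(t)‖₂² ≤ ‖r(0)‖₂²·exp(−2β_min t)` and `r(t) → 0`. -/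
theorem sliding_surface_asymptotic_stability
    (ρ : ℝ) (hρ : ρ ∈ Set.Ioo (1 : ℝ) 2)
    (α β : Fin 3 → ℝ) (hα : ∀ i, 0 < α i) (hβ : ∀ i, 0 < β i)
    (r : ℝ → Fin 3 → ℝ) (hr : Differentiable ℝ r)
    (hdyn : ∀ i, ∀ t, 0 ≤ t →
      deriv (fun τ => r τ i) t = -α i * sig ρ (r t i) - β i * r t i) :
    (∀ t, 0 ≤ t →
      (∑ i, (r t i) ^ 2) ≤
        (∑ i, (r 0 i) ^ 2) * Real.exp (-2 * min (β 0) (min (β 1) (β 2)) * t)) ∧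
    Filter.Tendsto r Filter.atTop (nhds 0) :=
  sliding_surface_asymptotic_stability_general ρ α β hα hβ r hr hdyn
end

section
/- Let q_v : ℝ → ℝ³ and q₄ : ℝ → ℝ be differentiable and let ω : ℝ → ℝ³ be continuous, satisfying the quaternion error kinematics q_v'(t) = (1/2)·(q₄(t)·ω(t) + q_v(t) × ω(t)) and q₄'(t) = −(1/2)·⟨q_v(t), ω(t)⟩ for all t. Then the function V(t) := ‖q_v(t)‖₂² + (1 − q₄(t))² is differentiable with V'(t) = ⟨q_v(t), ω(t)⟩ for all t. -/
open Matrix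

theorem HasDerivAt.sum_sq {ι : Type*} [Fintype ι] {f : ℝ → ι → ℝ} {f' : ι → ℝ} {t : ℝ}
    (hf : HasDerivAt f f' t) :
    HasDerivAt (fun τ => ∑ i, f τ i ^ 2) (2 * (f t ⬝ᵥ f')) t := by
  have hsum := HasDerivAt.fun_sum fun i (_ : i ∈ Finset.univ) =>
    (hasDerivAt_pi.mp hf i).fun_pow 2
  refine hsum.congr_deriv ?_
  simp only [dotProduct, Finset.mul_sum]
  exact Finset.sum_congr rfl fun i _ => by ring

theorem quaternion_lyapunov_derivative_general
    (qv : ℝ → Fin 3 → ℝ) (q₄ : ℝ → ℝ) (ω : ℝ → Fin 3 → ℝ)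
    (hqv : Differentiable ℝ qv) (hq₄ : Differentiable ℝ q₄)
    (hkin_v : ∀ t, deriv qv t =
      (1 / 2 : ℝ) • (q₄ t • ω t + crossProduct (qv t) (ω t)))
    (hkin_4 : ∀ t, deriv q₄ t = -(1 / 2) * ∑ i, qv t i * ω t i) :
    ∀ t, HasDerivAt (fun τ => (∑ i, (qv τ i) ^ 2) + (1 - q₄ τ) ^ 2)
      (∑ i, qv t i * ω t i) t := by
  intro t
  have hV := (hqv t).hasDerivAt.sum_sq.add (((hq₄ t).hasDerivAt.const_sub 1).pow 2)
  refine hV.congr_deriv ?_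
  have hdot : qv t ⬝ᵥ deriv qv t = (1 / 2) * q₄ t * (qv t ⬝ᵥ ω t) := by
    rw [hkin_v, dotProduct_smul, dotProduct_add, dotProduct_smul, dot_self_cross]
    simp only [smul_eq_mul, add_zero]
    ring
  rw [hdot, hkin_4]
  simp only [dotProduct]
  ring

/-- Lyapunov derivative along quaternion error kinematics:
`V = ‖q_v‖₂² + (1 − q₄)²` has derivative `V' = ⟨q_v, ω⟩`. -/
theorem quaternion_lyapunov_derivative
    (qv : ℝ → Fin 3 → ℝ) (q₄ : ℝ → ℝ) (ω : ℝ → Fin 3 → ℝ)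
    (hqv : Differentiable ℝ qv) (hq₄ : Differentiable ℝ q₄) (hω : Continuous ω)
    (hkin_v : ∀ t, deriv qv t =
      (1 / 2 : ℝ) • (q₄ t • ω t + crossProduct (qv t) (ω t)))
    (hkin_4 : ∀ t, deriv q₄ t = -(1 / 2) * ∑ i, qv t i * ω t i) :
    ∀ t, HasDerivAt (fun τ => (∑ i, (qv τ i) ^ 2) + (1 - q₄ τ) ^ 2)
      (∑ i, qv t i * ω t i) t :=
  quaternion_lyapunov_derivative_general qv q₄ ω hqv hq₄ hkin_v hkin_4
end
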